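/- arXiv:math/0609739 — 2 statements merged into one kernel-verified Lean document; each statement's English description precedes it below -/
import Mathlib

section
/- Let c, C, δ be positive real numbers and let a : [1, ∞) → ℂ be a twice differentiable function such that |a″(y) − c²·a(y)| ≤ C·e^{−δy} for all y ≥ 1, and such that ∫₁^∞ |a(y)|²·y^{−2} dy < ∞. Then a decays exponentially: there exist constants C′ > 0 and δ′ > 0 such that |a(y)| ≤ C′·e^{−δ′y} for all y ≥ 1. -/
/-!
Put `g = a' + c a` and `h = a' - c a`, so that `g' = c g + f` and `h' = -c h + f` with
`f = a'' - c² a = O(e^{-δy})`. The integrating factor `e^{cy}` shows that `h` decays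
exponentially, and the integrating factor `e^{-cy}` shows that `e^{-cy} g` converges to some
`L` at rate `e^{-(c+δ)y}`. Hence `a = (g - h) / 2c` differs from `e^{cy} L / 2c` by an exponentially
decaying function. If `L ≠ 0`, then `|a(y)| / y → ∞`, which is incompatible with
`∫₁^∞ |a|² y⁻² < ∞`; so `L = 0` and `a` itself decays.
-/

open Real MeasureTheory Set Filter Topology

variable {E : Type*} [NormedAddCommGroup E]

theorem exp_neg_mul_le_of_le {m t δ δ' : ℝ} (ht : m ≤ t) (hδ : δ' ≤ δ) :
    exp (-δ * t) ≤ exp (-(δ - δ') * m) * exp (-δ' * t) := by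
  rw [← exp_add]
  exact exp_le_exp.2 (by nlinarith)

def ExpDecayOn (u : ℝ → E) (s : Set ℝ) : Prop :=
  ∃ K > 0, ∃ ε > 0, ∀ t ∈ s, ‖u t‖ ≤ K * exp (-ε * t)

namespace ExpDecayOn

variable {u v : ℝ → E} {s : Set ℝ}

theorem of_norm_le {K ε : ℝ} (hε : 0 < ε) (h : ∀ t ∈ s, ‖u t‖ ≤ K * exp (-ε * t)) :
    ExpDecayOn u s :=
  ⟨max K 1, by positivity, ε, hε, fun t ht =>
    (h t ht).trans (mul_le_mul_of_nonneg_right (le_max_left _ _) (exp_pos _).le)⟩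

theorem sub (hu : ExpDecayOn u s) (hv : ExpDecayOn v s) (hs : BddBelow s) :
    ExpDecayOn (fun t => u t - v t) s := by
  obtain ⟨K, hK0, ε, hε, hK⟩ := hu
  obtain ⟨K', hK0', ε', hε', hK'⟩ := hv
  obtain ⟨m, hm⟩ := hs
  refine of_norm_le (lt_min hε hε') (K := K * exp (-(ε - min ε ε') * m) +
    K' * exp (-(ε' - min ε ε') * m)) fun t ht => ?_
  calc ‖u t - v t‖ ≤ K * exp (-ε * t) + K' * exp (-ε' * t) :=
        (norm_sub_le _ _).trans (add_le_add (hK t ht) (hK' t ht))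
    _ ≤ K * (exp (-(ε - min ε ε') * m) * exp (-min ε ε' * t)) +
          K' * (exp (-(ε' - min ε ε') * m) * exp (-min ε ε' * t)) := by
        gcongr
        · exact exp_neg_mul_le_of_le (hm ht) (min_le_left _ _)
        · exact exp_neg_mul_le_of_le (hm ht) (min_le_right _ _)
    _ = _ := by ring

theorem const_smul [NormedSpace ℝ E] (hu : ExpDecayOn u s) (r : ℝ) :
    ExpDecayOn (fun t => r • u t) s := by
  obtain ⟨K, -, ε, hε, hK⟩ := hu
  refine of_norm_le hε (K := ‖r‖ * K) fun t ht => ?_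
  rw [norm_smul, mul_assoc]
  exact mul_le_mul_of_nonneg_left (hK t ht) (norm_nonneg r)

theorem tendsto_zero {x₀ : ℝ} (hu : ExpDecayOn u (Ici x₀)) : Tendsto u atTop (𝓝 0) := by
  obtain ⟨K, -, ε, hε, hK⟩ := hu
  refine squeeze_zero_norm' ((eventually_ge_atTop x₀).mono hK) ?_
  simpa using (tendsto_exp_neg_atTop_nhds_zero.comp (tendsto_id.const_mul_atTop hε)).const_mul K

end ExpDecayOn

variable [NormedSpace ℝ E]

theorem hasDerivWithinAt_exp_neg_mul_smul {u : ℝ → E} {f : E} {s : Set ℝ} {k t : ℝ}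
    (hu : HasDerivWithinAt u (k • u t + f) s t) :
    HasDerivWithinAt (fun t => exp (-(k * t)) • u t) (exp (-(k * t)) • f) s t := by
  have hexp : HasDerivAt (fun t => exp (-(k * t))) (exp (-(k * t)) * -k) t := by
    simpa using ((hasDerivAt_id t).const_mul k).neg.exp
  refine (hexp.hasDerivWithinAt.smul hu).congr_deriv ?_
  rw [smul_add, smul_smul, mul_neg, neg_smul]
  abel

theorem norm_sub_le_of_norm_deriv_le_exp {u u' : ℝ → E} {x₀ y z b C : ℝ} (hb : b ≠ 0)
    (hu : ∀ t ∈ Ici x₀, HasDerivWithinAt u (u' t) (Ici x₀) t)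
    (hu' : ∀ t ∈ Ici x₀, ‖u' t‖ ≤ C * exp (b * t)) (hy : x₀ ≤ y) (hyz : y ≤ z) :
    ‖u z - u y‖ ≤ C / b * (exp (b * z) - exp (b * y)) := by
  have hB (t : ℝ) :
      HasDerivAt (fun t => C / b * (exp (b * t) - exp (b * y))) (C * exp (b * t)) t := by
    refine ((((hasDerivAt_id' t).const_mul b).exp.sub_const (exp (b * y))).const_mul
      (C / b)).congr_deriv ?_
    field_simp
  have hx₀ {t : ℝ} (ht : y ≤ t) : t ∈ Ici x₀ := hy.trans ht
  refine image_norm_le_of_norm_deriv_right_le_deriv_boundary (f := fun t => u t - u y)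
    (fun t ht => ((hu t (hx₀ ht.1)).continuousWithinAt.mono (Icc_subset_Ici_self.trans
      (Ici_subset_Ici.2 hy))).sub continuousWithinAt_const)
    (fun t ht => ((hu t (hx₀ ht.1)).mono (Ici_subset_Ici.2 (hx₀ ht.1))).sub_const _)
    (by simp) hB (fun t ht => hu' t (hx₀ ht.1)) ⟨hyz, le_rfl⟩

theorem norm_le_of_norm_deriv_le_exp {u u' : ℝ → E} {x₀ b C : ℝ} (hb : 0 < b) (hC : 0 ≤ C)
    (hu : ∀ t ∈ Ici x₀, HasDerivWithinAt u (u' t) (Ici x₀) t)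
    (hu' : ∀ t ∈ Ici x₀, ‖u' t‖ ≤ C * exp (b * t)) {t : ℝ} (ht : t ∈ Ici x₀) :
    ‖u t‖ ≤ ‖u x₀‖ + C / b * exp (b * t) := by
  have hdiff := norm_sub_le_of_norm_deriv_le_exp hb.ne' hu hu' le_rfl ht
  have htri := norm_le_insert' (u t) (u x₀)
  have hstart : 0 ≤ C / b * exp (b * x₀) := by positivity
  linarith

theorem exists_norm_sub_le_of_norm_deriv_le_exp_neg [CompleteSpace E] {u u' : ℝ → E}
    {x₀ b C : ℝ} (hb : 0 < b)
    (hu : ∀ t ∈ Ici x₀, HasDerivWithinAt u (u' t) (Ici x₀) t)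
    (hu' : ∀ t ∈ Ici x₀, ‖u' t‖ ≤ C * exp (-b * t)) :
    ∃ L : E, ∀ t ∈ Ici x₀, ‖u t - L‖ ≤ C / b * exp (-b * t) := by
  have hC : 0 ≤ C :=
    nonneg_of_mul_nonneg_left ((norm_nonneg _).trans (hu' x₀ self_mem_Ici)) (exp_pos _)
  have hCauchy {y z : ℝ} (hy : x₀ ≤ y) (hyz : y ≤ z) : ‖u z - u y‖ ≤ C / b * exp (-b * y) := by
    calc ‖u z - u y‖ ≤ C / -b * (exp (-b * z) - exp (-b * y)) :=
          norm_sub_le_of_norm_deriv_le_exp (neg_ne_zero.2 hb.ne') hu hu' hy hyz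
      _ = C / b * exp (-b * y) - C / b * exp (-b * z) := by ring
      _ ≤ C / b * exp (-b * y) := sub_le_self _ (by positivity)
  have hsmall : Tendsto (fun y => C / b * exp (-b * y)) atTop (𝓝 0) := by
    simpa using
      (tendsto_exp_neg_atTop_nhds_zero.comp (tendsto_id.const_mul_atTop hb)).const_mul (C / b)
  obtain ⟨L, hL⟩ : ∃ L, Tendsto u atTop (𝓝 L) := by
    refine cauchySeq_tendsto_of_complete (Metric.cauchySeq_iff'.2 fun ε hε => ?_)
    obtain ⟨N, hN⟩ := eventually_atTop.1 ((hsmall.eventually (gt_mem_nhds hε)).and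
      (eventually_ge_atTop x₀))
    exact ⟨N, fun z hz => (dist_eq_norm _ _).trans_lt
      ((hCauchy (hN N le_rfl).2 hz).trans_lt (hN N le_rfl).1)⟩
  refine ⟨L, fun y hy => ?_⟩
  rw [← norm_neg, neg_sub]
  exact le_of_tendsto (hL.sub_const (u y)).norm
    ((eventually_ge_atTop y).mono fun z hz => hCauchy hy hz)

theorem expDecayOn_of_hasDerivWithinAt_neg_smul_add {h f : ℝ → E} {x₀ c δ C : ℝ}
    (hc : 0 < c) (hδ : 0 < δ)
    (hh : ∀ t ∈ Ici x₀, HasDerivWithinAt h ((-c) • h t + f t) (Ici x₀) t)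
    (hf : ∀ t ∈ Ici x₀, ‖f t‖ ≤ C * exp (-δ * t)) : ExpDecayOn h (Ici x₀) := by
  obtain ⟨ε, hε, hεc, hεδ⟩ : ∃ ε, 0 < ε ∧ ε < c ∧ ε ≤ δ :=
    ⟨min c δ / 2, by positivity, by linarith [min_le_left c δ], by linarith [min_le_right c δ]⟩
  have hC : 0 ≤ C :=
    nonneg_of_mul_nonneg_left ((norm_nonneg _).trans (hf x₀ self_mem_Ici)) (exp_pos _)
  set C₁ := C * exp (-(δ - ε) * x₀)
  have hH (t : ℝ) (ht : t ∈ Ici x₀) :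
      HasDerivWithinAt (fun t => exp (c * t) • h t) (exp (c * t) • f t) (Ici x₀) t := by
    simpa using hasDerivWithinAt_exp_neg_mul_smul (hh t ht)
  have hH' (t : ℝ) (ht : t ∈ Ici x₀) : ‖exp (c * t) • f t‖ ≤ C₁ * exp ((c - ε) * t) :=
    calc ‖exp (c * t) • f t‖ ≤ exp (c * t) * (C * exp (-δ * t)) := by
          rw [norm_smul_of_nonneg (exp_pos _).le]; gcongr; exact hf t ht
      _ ≤ exp (c * t) * (C * (exp (-(δ - ε) * x₀) * exp (-ε * t))) := by
          gcongr; exact exp_neg_mul_le_of_le ht hεδ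
      _ = C₁ * exp ((c - ε) * t) := by
          simp only [C₁, mul_left_comm _ C, mul_assoc, ← exp_add]; ring_nf
  refine ExpDecayOn.of_norm_le hε (K := exp (c * x₀) * ‖h x₀‖ * exp (-(c - ε) * x₀) +
    C₁ / (c - ε)) fun t ht => ?_
  have hbound := norm_le_of_norm_deriv_le_exp (sub_pos.2 hεc) (by positivity) hH hH' ht
  rw [norm_smul_of_nonneg (exp_pos _).le, norm_smul_of_nonneg (exp_pos _).le] at hbound
  calc ‖h t‖ = exp (-c * t) * (exp (c * t) * ‖h t‖) := by
        rw [← mul_assoc, ← exp_add]; ring_nf; rw [exp_zero, one_mul]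
    _ ≤ exp (-c * t) * (exp (c * x₀) * ‖h x₀‖ + C₁ / (c - ε) * exp ((c - ε) * t)) := by
        gcongr
    _ = exp (c * x₀) * ‖h x₀‖ * exp (-c * t) + C₁ / (c - ε) * exp (-ε * t) := by
        rw [mul_add, mul_left_comm _ (C₁ / (c - ε)), ← exp_add]; ring_nf
    _ ≤ exp (c * x₀) * ‖h x₀‖ * (exp (-(c - ε) * x₀) * exp (-ε * t)) +
          C₁ / (c - ε) * exp (-ε * t) := by
        gcongr; exact exp_neg_mul_le_of_le ht hεc.le
    _ = _ := by ring

theorem exists_norm_sub_exp_smul_le [CompleteSpace E] {g f : ℝ → E} {x₀ c δ C : ℝ}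
    (hcδ : 0 < c + δ) (hg : ∀ t ∈ Ici x₀, HasDerivWithinAt g (c • g t + f t) (Ici x₀) t)
    (hf : ∀ t ∈ Ici x₀, ‖f t‖ ≤ C * exp (-δ * t)) :
    ∃ L : E, ∀ t ∈ Ici x₀, ‖g t - exp (c * t) • L‖ ≤ C / (c + δ) * exp (-δ * t) := by
  have hG' (t : ℝ) (ht : t ∈ Ici x₀) : ‖exp (-(c * t)) • f t‖ ≤ C * exp (-(c + δ) * t) :=
    calc ‖exp (-(c * t)) • f t‖ ≤ exp (-(c * t)) * (C * exp (-δ * t)) := by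
          rw [norm_smul_of_nonneg (exp_pos _).le]; gcongr; exact hf t ht
      _ = C * exp (-(c + δ) * t) := by rw [mul_left_comm, ← exp_add]; ring_nf
  obtain ⟨L, hL⟩ := exists_norm_sub_le_of_norm_deriv_le_exp_neg hcδ
    (fun t ht => hasDerivWithinAt_exp_neg_mul_smul (hg t ht)) hG'
  refine ⟨L, fun t ht => ?_⟩
  have hfactor : g t - exp (c * t) • L = exp (c * t) • (exp (-(c * t)) • g t - L) := by
    rw [smul_sub, smul_smul, ← exp_add, add_neg_cancel, exp_zero, one_smul]
  calc ‖g t - exp (c * t) • L‖ = exp (c * t) * ‖exp (-(c * t)) • g t - L‖ := by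
        rw [hfactor, norm_smul_of_nonneg (exp_pos _).le]
    _ ≤ exp (c * t) * (C / (c + δ) * exp (-(c + δ) * t)) := by gcongr; exact hL t ht
    _ = C / (c + δ) * exp (-δ * t) := by rw [mul_left_comm, ← exp_add]; ring_nf

theorem exists_expDecayOn_sub_exp_smul [CompleteSpace E] {a a' a'' : ℝ → E} {x₀ c δ C : ℝ}
    (hc : 0 < c) (hδ : 0 < δ)
    (ha : ∀ t ∈ Ici x₀, HasDerivWithinAt a (a' t) (Ici x₀) t)
    (ha' : ∀ t ∈ Ici x₀, HasDerivWithinAt a' (a'' t) (Ici x₀) t)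
    (hode : ∀ t ∈ Ici x₀, ‖a'' t - c ^ 2 • a t‖ ≤ C * exp (-δ * t)) :
    ∃ L : E, ExpDecayOn (fun t => a t - exp (c * t) • L) (Ici x₀) := by
  have hg (t : ℝ) (ht : t ∈ Ici x₀) : HasDerivWithinAt (fun t => a' t + c • a t)
      (c • (a' t + c • a t) + (a'' t - c ^ 2 • a t)) (Ici x₀) t :=
    ((ha' t ht).add ((ha t ht).const_smul c)).congr_deriv (by module)
  have hh (t : ℝ) (ht : t ∈ Ici x₀) : HasDerivWithinAt (fun t => a' t - c • a t)
      ((-c) • (a' t - c • a t) + (a'' t - c ^ 2 • a t)) (Ici x₀) t :=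
    ((ha' t ht).sub ((ha t ht).const_smul c)).congr_deriv (by module)
  obtain ⟨L, hL⟩ := exists_norm_sub_exp_smul_le (by linarith) hg hode
  refine ⟨(2 * c)⁻¹ • L, ?_⟩
  have hsplit : (fun t => a t - exp (c * t) • (2 * c)⁻¹ • L) =
      fun t => (2 * c)⁻¹ • ((a' t + c • a t - exp (c * t) • L) - (a' t - c • a t)) := by
    funext t
    match_scalars <;> field_simp <;> ring
  rw [hsplit]
  have hdecay_g := ExpDecayOn.of_norm_le hδ hL
  have hdecay_h := expDecayOn_of_hasDerivWithinAt_neg_smul_add hc hδ hh hode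
  exact (hdecay_g.sub hdecay_h bddBelow_Ici).const_smul _

theorem tendsto_norm_div_atTop_of_tendsto_sub_exp_smul {u : ℝ → E} {c : ℝ} {L : E} (hc : 0 < c)
    (hL : L ≠ 0) (hu : Tendsto (fun t => u t - exp (c * t) • L) atTop (𝓝 0)) :
    Tendsto (fun t => ‖u t‖ / t) atTop atTop := by
  have hlower : Tendsto (fun t => ‖L‖ * (exp (c * t) / t) + -t⁻¹) atTop atTop := by
    refine Tendsto.atTop_add (Tendsto.const_mul_atTop (norm_pos_iff.2 hL) ?_)
      (by simpa using tendsto_inv_atTop_zero.neg)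
    simpa using tendsto_exp_mul_div_rpow_atTop 1 c hc
  refine tendsto_atTop_mono' atTop ?_ hlower
  filter_upwards [hu.norm.eventually (eventually_le_nhds (by norm_num : ‖(0 : E)‖ < 1)),
    eventually_gt_atTop 0] with t hclose ht
  have hu_ge : exp (c * t) * ‖L‖ - 1 ≤ ‖u t‖ := by
    have htri := norm_sub_norm_le (exp (c * t) • L) (u t)
    rw [norm_smul_of_nonneg (exp_pos _).le, norm_sub_rev] at htri
    linarith
  calc ‖L‖ * (exp (c * t) / t) + -t⁻¹ = (exp (c * t) * ‖L‖ - 1) / t := by field_simp; ring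
    _ ≤ ‖u t‖ / t := by gcongr

theorem not_integrableOn_Ici_of_tendsto_atTop {f : ℝ → ℝ} (hf : Tendsto f atTop atTop) (x₀ : ℝ) :
    ¬ IntegrableOn f (Ici x₀) := by
  intro hint
  obtain ⟨y, hy⟩ := eventually_atTop.1 (hf.eventually_ge_atTop 1)
  have hone : IntegrableOn (fun _ => (1 : ℝ)) (Ici (max x₀ y)) :=
    (hint.mono_set (Ici_subset_Ici.2 (le_max_left _ _))).mono' aestronglyMeasurable_const
      ((ae_restrict_iff' measurableSet_Ici).2 (Eventually.of_forall fun t ht => by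
        simpa using hy t ((le_max_right _ _).trans ht)))
  simp [integrableOn_const_iff, volume_Ici] at hone

theorem exp_decay_of_ode_and_L2_general (c C δ : ℝ) (hc : 0 < c) (hδ : 0 < δ)
    (a a' a'' : ℝ → ℂ)
    (ha : ∀ y ∈ Set.Ici (1 : ℝ), HasDerivWithinAt a (a' y) (Set.Ici 1) y)
    (ha' : ∀ y ∈ Set.Ici (1 : ℝ), HasDerivWithinAt a' (a'' y) (Set.Ici 1) y)
    (hode : ∀ y ∈ Set.Ici (1 : ℝ), ‖a'' y - ((c : ℂ)) ^ 2 * a y‖ ≤ C * Real.exp (-δ * y))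
    (hL2 : IntegrableOn (fun y : ℝ => ‖a y‖ ^ 2 / y ^ 2) (Set.Ici 1)) :
    ∃ C' > 0, ∃ δ' > 0, ∀ y ∈ Set.Ici (1 : ℝ), ‖a y‖ ≤ C' * Real.exp (-δ' * y) := by
  obtain ⟨L, hL⟩ := exists_expDecayOn_sub_exp_smul hc hδ ha ha'
    (fun y hy => by simpa [Complex.real_smul] using hode y hy)
  obtain rfl : L = 0 := by
    by_contra hL0
    have hgrowth := tendsto_norm_div_atTop_of_tendsto_sub_exp_smul hc hL0 hL.tendsto_zero
    refine not_integrableOn_Ici_of_tendsto_atTop ?_ 1 hL2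
    exact ((tendsto_pow_atTop two_ne_zero).comp hgrowth).congr fun y => div_pow _ _ 2
  simp only [smul_zero, sub_zero] at hL
  exact hL

/-- Quantitative ODE estimate for nonzero frequency Fourier coefficients: if
`a : [1, ∞) → ℂ` is twice differentiable with `|a″(y) − c²·a(y)| ≤ C·e^{−δy}` and
`∫₁^∞ |a(y)|²·y^{−2} dy < ∞`, then `a` decays exponentially. -/
theorem exp_decay_of_ode_and_L2 (c C δ : ℝ) (hc : 0 < c) (hC : 0 < C) (hδ : 0 < δ)
    (a a' a'' : ℝ → ℂ)
    (ha : ∀ y ∈ Set.Ici (1 : ℝ), HasDerivWithinAt a (a' y) (Set.Ici 1) y)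
    (ha' : ∀ y ∈ Set.Ici (1 : ℝ), HasDerivWithinAt a' (a'' y) (Set.Ici 1) y)
    (hode : ∀ y ∈ Set.Ici (1 : ℝ), ‖a'' y - ((c : ℂ)) ^ 2 * a y‖ ≤ C * Real.exp (-δ * y))
    (hL2 : IntegrableOn (fun y : ℝ => ‖a y‖ ^ 2 / y ^ 2) (Set.Ici 1)) :
    ∃ C' > 0, ∃ δ' > 0, ∀ y ∈ Set.Ici (1 : ℝ), ‖a y‖ ≤ C' * Real.exp (-δ' * y) :=
  exp_decay_of_ode_and_L2_general c C δ hc hδ a a' a'' ha ha' hode hL2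
end

section
/- Let C, δ be positive real numbers and let a : [1, ∞) → ℂ be a twice differentiable function such that |a″(y)| ≤ C·e^{−δy} for all y ≥ 1, and such that ∫₁^∞ |a(y)|²·y^{−2} dy < ∞. Then there exists a constant a₀ ∈ ℂ and constants C′ > 0, δ′ > 0 such that |a(y) − a₀| ≤ C′·e^{−δ′y} for all y ≥ 1; in particular a(y) converges to a₀ as y → ∞. -/
/-!
Since `‖a''‖` decays exponentially, `a'` converges exponentially fast to some `L` (compare `a'`
with the primitive of the bound). Then `a(y) - y • L` stays bounded, so if `L ≠ 0` we get
`‖a y‖ ≥ ‖L‖ y / 2` for large `y`, and `‖a y‖² / y²` is bounded below by a positive constant on a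
half-line, contradicting integrability. Hence `L = 0`, and the same argument applied to `a`
gives exponential convergence of `a`.
-/

open Real MeasureTheory Set Filter Topology

variable {E : Type*} [NormedAddCommGroup E] [NormedSpace ℝ E] {f f' : ℝ → E} {x₀ K δ : ℝ}

lemma norm_sub_le_of_norm_deriv_le_exp_s11 (hδ : 0 < δ)
    (hf : ∀ y ∈ Ici x₀, HasDerivWithinAt f (f' y) (Ici x₀) y)
    (hf' : ∀ y ∈ Ici x₀, ‖f' y‖ ≤ K * exp (-δ * y)) {z y : ℝ} (hz : x₀ ≤ z) (hzy : z ≤ y) :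
    ‖f y - f z‖ ≤ K / δ * exp (-δ * z) := by
  have hK : 0 ≤ K := nonneg_of_mul_nonneg_left ((norm_nonneg _).trans (hf' z hz)) (exp_pos _)
  have hsub : Icc z y ⊆ Ici x₀ := fun t ht => hz.trans ht.1
  have hB : ∀ t, HasDerivAt (fun t => K / δ * exp (-δ * z) - K / δ * exp (-δ * t))
      (K * exp (-δ * t)) t := by
    intro t
    refine ((((hasDerivAt_id t).const_mul (-δ)).exp.const_mul (K / δ)).const_sub
      (K / δ * exp (-δ * z))).congr_deriv ?_
    simp only [id]
    field_simp
  have hfB := image_norm_le_of_norm_deriv_right_le_deriv_boundary (f := fun t => f t - f z)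
    (fun t ht => ((hf t (hsub ht)).continuousWithinAt.mono hsub).sub continuousWithinAt_const)
    (fun t ht => ((hf t (hsub (Ico_subset_Icc_self ht))).mono
      (Ici_subset_Ici.2 (hsub (Ico_subset_Icc_self ht)))).sub_const _)
    (by simp) hB (fun t ht => hf' t (hsub (Ico_subset_Icc_self ht))) (right_mem_Icc.2 hzy)
  have htail : 0 ≤ K / δ * exp (-δ * y) := by positivity
  linarith

lemma exists_tendsto_of_norm_deriv_le_exp [CompleteSpace E] (hδ : 0 < δ)
    (hf : ∀ y ∈ Ici x₀, HasDerivWithinAt f (f' y) (Ici x₀) y)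
    (hf' : ∀ y ∈ Ici x₀, ‖f' y‖ ≤ K * exp (-δ * y)) :
    ∃ l, (∀ y ∈ Ici x₀, ‖f y - l‖ ≤ K / δ * exp (-δ * y)) ∧ Tendsto f atTop (𝓝 l) := by
  have hdecay : Tendsto (fun y => K / δ * exp (-δ * y)) atTop (𝓝 0) := by
    simpa using (tendsto_exp_atBot.comp
      (tendsto_id.const_mul_atTop_of_neg (neg_neg_of_pos hδ))).const_mul (K / δ)
  have hcauchy : CauchySeq f := by
    refine Metric.cauchySeq_iff'.2 fun ε hε => ?_
    obtain ⟨N, hN, hNε⟩ := ((eventually_ge_atTop x₀).and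
      (hdecay.eventually (gt_mem_nhds hε))).exists
    exact ⟨N, fun y hy => (dist_eq_norm _ _).trans_lt
      ((norm_sub_le_of_norm_deriv_le_exp_s11 hδ hf hf' hN hy).trans_lt hNε)⟩
  obtain ⟨l, hl⟩ := cauchySeq_tendsto_of_complete hcauchy
  refine ⟨l, fun y hy => ?_, hl⟩
  refine le_of_tendsto ((tendsto_const_nhds.sub hl).norm) ?_
  filter_upwards [eventually_ge_atTop y] with t ht
  rw [norm_sub_rev]
  exact norm_sub_le_of_norm_deriv_le_exp_s11 hδ hf hf' hy ht

lemma exists_norm_sub_smul_le_of_norm_deriv_sub_le_exp {L : E} (hδ : 0 < δ)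
    (hf : ∀ y ∈ Ici x₀, HasDerivWithinAt f (f' y) (Ici x₀) y)
    (hf' : ∀ y ∈ Ici x₀, ‖f' y - L‖ ≤ K * exp (-δ * y)) :
    ∃ M, ∀ y ∈ Ici x₀, ‖f y - y • L‖ ≤ M := by
  have hF : ∀ y ∈ Ici x₀, HasDerivWithinAt (fun t => f t - t • L) (f' y - L) (Ici x₀) y :=
    fun y hy => (hf y hy).sub (((hasDerivAt_id y).smul_const L).hasDerivWithinAt.congr_deriv
      (one_smul ℝ L))
  refine ⟨K / δ * exp (-δ * x₀) + ‖f x₀ - x₀ • L‖, fun y hy => ?_⟩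
  have hdiff := norm_sub_le_of_norm_deriv_le_exp_s11 hδ hF hf' le_rfl hy
  have htri := norm_le_norm_sub_add (f y - y • L) (f x₀ - x₀ • L)
  linarith

lemma not_integrableOn_norm_sq_div_sq_of_norm_sub_smul_le {L : E} {M : ℝ}
    (hL : L ≠ 0) (hf : ∀ y ∈ Ici x₀, ‖f y - y • L‖ ≤ M) :
    ¬ IntegrableOn (fun y => ‖f y‖ ^ 2 / y ^ 2) (Ici x₀) := by
  intro hint
  have hLpos : 0 < ‖L‖ := norm_pos_iff.2 hL
  set Y := max x₀ (max 1 (2 * M / ‖L‖))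
  have hconst : IntegrableOn (fun _ => ‖L‖ ^ 2 / 4) (Ici Y) := by
    refine (hint.mono_set (Ici_subset_Ici.2 (le_max_left _ _))).mono' aestronglyMeasurable_const ?_
    filter_upwards [ae_restrict_mem measurableSet_Ici] with y hy
    have hy₀ : x₀ ≤ y := le_of_max_le_left hy
    have hy₁ : 1 ≤ y := le_of_max_le_left (le_of_max_le_right hy)
    have hyM : 2 * M ≤ ‖L‖ * y := (div_le_iff₀' hLpos).1 (le_of_max_le_right (le_of_max_le_right hy))
    have hlin : ‖L‖ * y / 2 ≤ ‖f y‖ := by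
      have hsmul : ‖y • L‖ = ‖L‖ * y := by
        rw [norm_smul, norm_of_nonneg (by linarith), mul_comm]
      have htri := norm_le_norm_sub_add (y • L) (f y)
      rw [norm_sub_rev, hsmul] at htri
      linarith [hf y hy₀]
    rw [norm_of_nonneg (by positivity), div_le_div_iff₀ (by norm_num) (by positivity)]
    nlinarith [pow_le_pow_left₀ (by positivity) hlin 2]
  rw [integrableOn_const_iff] at hconst
  simp [hL] at hconst

/-- Quantitative ODE estimate for the zero-frequency Fourier coefficient: if
`a : [1, ∞) → ℂ` is twice differentiable with `|a″(y)| ≤ C·e^{−δy}` and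
`∫₁^∞ |a(y)|²·y^{−2} dy < ∞`, then `a` converges exponentially fast to a constant `a₀`. -/
theorem exp_convergence_of_ode_and_L2 (C δ : ℝ) (hC : 0 < C) (hδ : 0 < δ)
    (a a' a'' : ℝ → ℂ)
    (ha : ∀ y ∈ Set.Ici (1 : ℝ), HasDerivWithinAt a (a' y) (Set.Ici 1) y)
    (ha' : ∀ y ∈ Set.Ici (1 : ℝ), HasDerivWithinAt a' (a'' y) (Set.Ici 1) y)
    (hode : ∀ y ∈ Set.Ici (1 : ℝ), ‖a'' y‖ ≤ C * Real.exp (-δ * y))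
    (hL2 : IntegrableOn (fun y : ℝ => ‖a y‖ ^ 2 / y ^ 2) (Set.Ici 1)) :
    ∃ a₀ : ℂ, ∃ C' > 0, ∃ δ' > 0,
      (∀ y ∈ Set.Ici (1 : ℝ), ‖a y - a₀‖ ≤ C' * Real.exp (-δ' * y)) ∧
      Tendsto a atTop (nhds a₀) := by
  obtain ⟨L, ha'L, -⟩ := exists_tendsto_of_norm_deriv_le_exp hδ ha' hode
  have hL : L = 0 := by
    by_contra hL
    obtain ⟨M, hM⟩ := exists_norm_sub_smul_le_of_norm_deriv_sub_le_exp hδ ha ha'L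
    exact not_integrableOn_norm_sq_div_sq_of_norm_sub_smul_le hL hM hL2
  subst hL
  simp only [sub_zero] at ha'L
  obtain ⟨a₀, ha₀, ha_lim⟩ := exists_tendsto_of_norm_deriv_le_exp hδ ha ha'L
  exact ⟨a₀, C / δ / δ, by positivity, δ, hδ, ha₀, ha_lim⟩
end
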